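/- arXiv:0806.2096 — 12 statements merged into one kernel-verified Lean document; each statement's English description precedes it below -/
import Mathlib

section
/- An antimatroidal point set S in ℤ² is closed under componentwise maximum (union): if (x_A,y_A) ∈ S and (x_B,y_B) ∈ S then (max(x_A,x_B), max(y_A,y_B)) ∈ S. -/
/-- `S` is an antimatroidal point set in the digital plane (points with
natural-number coordinates): finite, nonempty, accessible (A1), and
satisfying the exchange property (A2). -/
def IsAntimatroidal (S : Set (ℕ × ℕ)) : Prop :=
  S.Finite ∧ S.Nonempty ∧
  (∀ x y, (x, y) ∈ S → (x, y) ≠ (0, 0) →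
    (1 ≤ x ∧ (x - 1, y) ∈ S) ∨ (1 ≤ y ∧ (x, y - 1) ∈ S)) ∧
  (∀ a₁ a₂ b₁ b₂, (a₁, a₂) ∈ S → (b₁, b₂) ∈ S → ¬(a₁ ≤ b₁ ∧ a₂ ≤ b₂) →
    ((b₁ ≤ a₁ ∧ b₂ ≤ a₂) → ((b₁ + 1, b₂) ∈ S ∨ (b₁, b₂ + 1) ∈ S)) ∧
    ((a₁ ≤ b₁ ∧ b₂ ≤ a₂) → (b₁, b₂ + 1) ∈ S) ∧
    ((b₁ ≤ a₁ ∧ a₂ ≤ b₂) → (b₁ + 1, b₂) ∈ S))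

/-!
By symmetry `x_A ≤ x_B`, and only the case `y_B < y_A` needs work. Then `A` lies weakly left of and
strictly above `B`, so the exchange axiom (A2) adds the point directly above `B`; repeating this
climbs from `B` to `(x_B, y_A)`, which is the join.
-/

namespace IsAntimatroidal

variable {S : Set (ℕ × ℕ)}

theorem mk_fst_snd_add_one_mem (h : IsAntimatroidal S) {a b : ℕ × ℕ} (ha : a ∈ S) (hb : b ∈ S)
    (h₁ : a.1 ≤ b.1) (h₂ : b.2 < a.2) : (b.1, b.2 + 1) ∈ S :=
  (h.2.2.2 a.1 a.2 b.1 b.2 ha hb (by omega)).2.1 ⟨h₁, h₂.le⟩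

theorem mk_fst_snd_mem (h : IsAntimatroidal S) {a b : ℕ × ℕ} (ha : a ∈ S) (hb : b ∈ S)
    (h₁ : a.1 ≤ b.1) (h₂ : b.2 ≤ a.2) : (b.1, a.2) ∈ S := by
  suffices ∀ m, b.2 ≤ m → m ≤ a.2 → (b.1, m) ∈ S from this a.2 h₂ le_rfl
  intro m hm
  induction m, hm using Nat.le_induction with
  | base => exact fun _ => hb
  | succ m _ ih =>
    exact fun hm => h.mk_fst_snd_add_one_mem (b := (b.1, m)) ha (ih (by omega)) h₁ (by omega)

end IsAntimatroidal

theorem closed_under_union (S : Set (ℕ × ℕ)) (h : IsAntimatroidal S)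
    (A B : ℕ × ℕ) (hA : A ∈ S) (hB : B ∈ S) :
    (max A.1 B.1, max A.2 B.2) ∈ S := by
  wlog h₁ : A.1 ≤ B.1 generalizing A B
  · simpa only [max_comm] using this B A hB hA (by omega)
  rcases le_total A.2 B.2 with h₂ | h₂
  · simpa only [max_eq_right h₁, max_eq_right h₂] using hB
  · simpa only [max_eq_right h₁, max_eq_left h₂] using h.mk_fst_snd_mem hA hB h₁ h₂
end

section
/- In an antimatroidal point set S, for any two points A, B ∈ S with A componentwise strictly contained in B (A ≤ B and A ≠ B), there is a chain A = X₀ ⊂ X₁ ⊂ ... ⊂ X_k = B of points of S where each X_{i+1} is obtained from X_i by incrementing exactly one coordinate by 1. -/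
/-! The exchange property, applied to `B` and a point `A < B`, always lets `A` take a unit step
inside `S` that stays below `B`; iterating this climbs from `A` to `B`, since each step raises
the coordinate sum by one. -/

def IsUnitStep (P Q : ℕ × ℕ) : Prop :=
  Q = (P.1 + 1, P.2) ∨ Q = (P.1, P.2 + 1)

theorem IsUnitStep.coord_sum_eq {P Q : ℕ × ℕ} (h : IsUnitStep P Q) :
    Q.1 + Q.2 = P.1 + P.2 + 1 := by
  rcases h with rfl | rfl <;> simp only <;> omega

def HasUnitStepChain (S : Set (ℕ × ℕ)) (A B : ℕ × ℕ) : Prop :=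
  ∃ (k : ℕ) (f : ℕ → ℕ × ℕ), f 0 = A ∧ f k = B ∧ (∀ i ≤ k, f i ∈ S) ∧
    ∀ i < k, IsUnitStep (f i) (f (i + 1))

namespace HasUnitStepChain

variable {S : Set (ℕ × ℕ)} {A A' B : ℕ × ℕ}

theorem refl (hA : A ∈ S) : HasUnitStepChain S A A :=
  ⟨0, fun _ => A, rfl, rfl, fun _ _ => hA, fun _ hi => absurd hi (Nat.not_lt_zero _)⟩

theorem cons (hA : A ∈ S) (hstep : IsUnitStep A A') (h : HasUnitStepChain S A' B) :
    HasUnitStepChain S A B := by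
  obtain ⟨k, f, rfl, hfk, hfS, hf⟩ := h
  refine ⟨k + 1, fun | 0 => A | i + 1 => f i, rfl, hfk, ?_, ?_⟩
  · rintro (_ | i) hi
    exacts [hA, hfS i (by omega)]
  · rintro (_ | i) hi
    exacts [hstep, hf i (by omega)]

theorem of_forall_exists_step
    (hstep : ∀ A ∈ S, A ≤ B → A ≠ B → ∃ A' ∈ S, IsUnitStep A A' ∧ A' ≤ B)
    (hA : A ∈ S) (hAB : A ≤ B) : HasUnitStepChain S A B := by
  obtain ⟨n, hn⟩ : ∃ n, B.1 + B.2 = A.1 + A.2 + n :=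
    ⟨B.1 + B.2 - (A.1 + A.2), by have := Prod.le_def.1 hAB; omega⟩
  induction n generalizing A with
  | zero =>
    have hAB' := Prod.le_def.1 hAB
    have hBA : A = B := Prod.ext (by omega) (by omega)
    exact hBA ▸ refl hA
  | succ n ih =>
    have hne : A ≠ B := by rintro rfl; omega
    obtain ⟨A', hA', hAA', hA'B⟩ := hstep A hA hAB hne
    exact cons hA hAA' (ih hA' hA'B (by have := hAA'.coord_sum_eq; omega))

end HasUnitStepChain

theorem IsAntimatroidal.exists_unitStep_le {S : Set (ℕ × ℕ)} (h : IsAntimatroidal S)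
    {A B : ℕ × ℕ} (hA : A ∈ S) (hB : B ∈ S) (hAB : A ≤ B) (hne : A ≠ B) :
    ∃ A' ∈ S, IsUnitStep A A' ∧ A' ≤ B := by
  obtain ⟨a₁, a₂⟩ := A
  obtain ⟨b₁, b₂⟩ := B
  obtain ⟨h₁, h₂⟩ := Prod.mk_le_mk.1 hAB
  have hBA : ¬(b₁ ≤ a₁ ∧ b₂ ≤ a₂) := fun ⟨g₁, g₂⟩ =>
    hne (Prod.ext (le_antisymm h₁ g₁) (le_antisymm h₂ g₂))
  obtain ⟨hlt, hfst, hsnd⟩ := h.2.2.2 b₁ b₂ a₁ a₂ hB hA hBA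
  rcases h₁.lt_or_eq with h₁ | rfl
  · rcases h₂.lt_or_eq with h₂ | rfl
    · rcases hlt ⟨h₁.le, h₂.le⟩ with hS | hS
      · exact ⟨_, hS, Or.inl rfl, Prod.mk_le_mk.2 ⟨h₁, h₂.le⟩⟩
      · exact ⟨_, hS, Or.inr rfl, Prod.mk_le_mk.2 ⟨h₁.le, h₂⟩⟩
    · exact ⟨_, hsnd ⟨h₁.le, le_rfl⟩, Or.inl rfl, Prod.mk_le_mk.2 ⟨h₁, le_rfl⟩⟩
  · have h₂ : a₂ < b₂ := h₂.lt_of_ne fun h₂ => hne (h₂ ▸ rfl)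
    exact ⟨_, hfst ⟨le_rfl, h₂.le⟩, Or.inr rfl, Prod.mk_le_mk.2 ⟨le_rfl, h₂⟩⟩

theorem chain_property_general (S : Set (ℕ × ℕ)) (h : IsAntimatroidal S)
    (A B : ℕ × ℕ) (hA : A ∈ S) (hB : B ∈ S)
    (hle : A.1 ≤ B.1 ∧ A.2 ≤ B.2) :
    ∃ (k : ℕ) (f : ℕ → ℕ × ℕ), f 0 = A ∧ f k = B ∧
      (∀ i ≤ k, f i ∈ S) ∧
      (∀ i < k, f (i + 1) = ((f i).1 + 1, (f i).2) ∨
                f (i + 1) = ((f i).1, (f i).2 + 1)) :=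
  HasUnitStepChain.of_forall_exists_step
    (fun _ hA' hA'B hne => h.exists_unitStep_le hA' hB hA'B hne) hA (Prod.le_def.2 hle)

theorem chain_property (S : Set (ℕ × ℕ)) (h : IsAntimatroidal S)
    (A B : ℕ × ℕ) (hA : A ∈ S) (hB : B ∈ S)
    (hle : A.1 ≤ B.1 ∧ A.2 ≤ B.2) (hne : A ≠ B) :
    ∃ (k : ℕ) (f : ℕ → ℕ × ℕ), f 0 = A ∧ f k = B ∧
      (∀ i ≤ k, f i ∈ S) ∧
      (∀ i < k, f (i + 1) = ((f i).1 + 1, (f i).2) ∨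
                f (i + 1) = ((f i).1, (f i).2 + 1)) :=
  chain_property_general S h A B hA hB hle
end

section
/- An antimatroidal point set S in ℤ² is orthogonally convex: for any y* and any x₁ ≤ x ≤ x₂, if (x₁,y*) ∈ S and (x₂,y*) ∈ S then (x,y*) ∈ S; and symmetrically for vertical lines. -/
/-! Along a row or column, the exchange property lets a point of `S` step one unit towards
any point of `S` strictly beyond it; iterating the step fills the segment between them. -/

theorem Nat.le_induction_of_lt {P : ℕ → Prop} {m n : ℕ} (hm : P m)
    (succ : ∀ k, m ≤ k → k < n → P k → P (k + 1)) : ∀ k, m ≤ k → k ≤ n → P k := by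
  intro k hmk hkn
  induction k, hmk using Nat.le_induction with
  | base => exact hm
  | succ k hmk ih => exact succ k hmk hkn (ih (Nat.le_of_succ_le hkn))

namespace IsAntimatroidal

variable {S : Set (ℕ × ℕ)}

theorem succ_fst_mem (hS : IsAntimatroidal S) {a b y : ℕ} (ha : (a, y) ∈ S) (hb : (b, y) ∈ S)
    (hba : b < a) : (b + 1, y) ∈ S :=
  ((hS.2.2.2 a y b y ha hb (by omega)).2.2) ⟨hba.le, le_rfl⟩

theorem succ_snd_mem (hS : IsAntimatroidal S) {a b x : ℕ} (ha : (x, a) ∈ S) (hb : (x, b) ∈ S)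
    (hba : b < a) : (x, b + 1) ∈ S :=
  ((hS.2.2.2 x a x b ha hb (by omega)).2.1) ⟨le_rfl, hba.le⟩

end IsAntimatroidal

theorem orthogonally_convex (S : Set (ℕ × ℕ)) (h : IsAntimatroidal S) :
    (∀ y x₁ x₂ x, (x₁, y) ∈ S → (x₂, y) ∈ S → x₁ ≤ x → x ≤ x₂ → (x, y) ∈ S) ∧
    (∀ x y₁ y₂ y, (x, y₁) ∈ S → (x, y₂) ∈ S → y₁ ≤ y → y ≤ y₂ → (x, y) ∈ S) := by
  refine ⟨fun y x₁ x₂ x h₁ h₂ => ?_, fun x y₁ y₂ y h₁ h₂ => ?_⟩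
  · exact Nat.le_induction_of_lt (P := fun k => (k, y) ∈ S) h₁
      (fun _ _ hk hmem => h.succ_fst_mem h₂ hmem hk) x
  · exact Nat.le_induction_of_lt (P := fun k => (x, k) ∈ S) h₁
      (fun _ _ hk hmem => h.succ_snd_mem h₂ hmem hk) y
end

section
/- An antimatroidal point set S in ℤ² is N₄-connected: any two points of S are joined by a path within S whose consecutive points differ by 1 in exactly one coordinate. -/
/-- `q` is an `N₄`-neighbor of `p`: they differ by `1` in exactly one coordinate. -/
def N4Step (p q : ℕ × ℕ) : Prop :=
  (q.1 = p.1 + 1 ∧ q.2 = p.2) ∨ (p.1 = q.1 + 1 ∧ q.2 = p.2) ∨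
  (q.2 = p.2 + 1 ∧ q.1 = p.1) ∨ (p.2 = q.2 + 1 ∧ q.1 = p.1)

/-!
By accessibility every point of `S` other than the origin has an `N₄`-neighbour in `S` with smaller
coordinate sum, so descending along such neighbours joins every point of `S` to the origin inside
`S`. Hence the grid graph induced on `S` is connected, and a walk in it is the required path.
-/

def AccessiblePointSet (S : Set (ℕ × ℕ)) : Prop :=
  ∀ x y, (x, y) ∈ S → (x, y) ≠ (0, 0) →
    (1 ≤ x ∧ (x - 1, y) ∈ S) ∨ (1 ≤ y ∧ (x, y - 1) ∈ S)

theorem IsAntimatroidal.accessible {S : Set (ℕ × ℕ)} (h : IsAntimatroidal S) :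
    AccessiblePointSet S :=
  h.2.2.1

theorem N4Step.symm {p q : ℕ × ℕ} (h : N4Step p q) : N4Step q p := by
  unfold N4Step at *
  omega

theorem N4Step.irrefl (p : ℕ × ℕ) : ¬N4Step p p := by
  unfold N4Step
  omega

def n4Graph : SimpleGraph (ℕ × ℕ) where
  Adj := N4Step
  symm := ⟨fun _ _ => N4Step.symm⟩
  loopless := ⟨N4Step.irrefl⟩

namespace AccessiblePointSet

variable {S : Set (ℕ × ℕ)}

theorem exists_n4Step_of_ne_origin (hS : AccessiblePointSet S) {p : ℕ × ℕ} (hp : p ∈ S)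
    (hp0 : p ≠ (0, 0)) : ∃ q ∈ S, N4Step p q ∧ q.1 + q.2 < p.1 + p.2 := by
  obtain ⟨x, y⟩ := p
  rcases hS x y hp hp0 with ⟨hx, hq⟩ | ⟨hy, hq⟩
  · exact ⟨_, hq, Or.inr (Or.inl ⟨by omega, rfl⟩), by simp only; omega⟩
  · exact ⟨_, hq, Or.inr (Or.inr (Or.inr ⟨by omega, rfl⟩)), by simp only; omega⟩

theorem exists_reachable_origin (hS : AccessiblePointSet S) (p : S) :
    ∃ h0 : (0, 0) ∈ S, (n4Graph.induce S).Reachable p ⟨(0, 0), h0⟩ := by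
  obtain ⟨p, hp⟩ := p
  induction hk : p.1 + p.2 using Nat.strong_induction_on generalizing p with
  | _ k ih =>
    by_cases hp0 : p = (0, 0)
    · subst hp0
      exact ⟨hp, .rfl⟩
    obtain ⟨q, hq, hpq, hlt⟩ := hS.exists_n4Step_of_ne_origin hp hp0
    obtain ⟨h0, hreach⟩ := ih _ (hk ▸ hlt) q hq rfl
    have hadj : (n4Graph.induce S).Adj ⟨p, hp⟩ ⟨q, hq⟩ := hpq
    exact ⟨h0, hadj.reachable.trans hreach⟩

theorem preconnected_induce_n4Graph (hS : AccessiblePointSet S) :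
    (n4Graph.induce S).Preconnected := fun p q => by
  obtain ⟨_, hp⟩ := hS.exists_reachable_origin p
  obtain ⟨_, hq⟩ := hS.exists_reachable_origin q
  exact hp.trans hq.symm

end AccessiblePointSet

theorem n4_connected (S : Set (ℕ × ℕ)) (h : IsAntimatroidal S)
    (A B : ℕ × ℕ) (hA : A ∈ S) (hB : B ∈ S) :
    ∃ (n : ℕ) (f : ℕ → ℕ × ℕ), f 0 = A ∧ f n = B ∧
      (∀ i ≤ n, f i ∈ S) ∧ (∀ i < n, N4Step (f i) (f (i + 1))) := by
  obtain ⟨w⟩ := h.accessible.preconnected_induce_n4Graph ⟨A, hA⟩ ⟨B, hB⟩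
  exact ⟨w.length, fun i => w.getVert i, by simp, by simp, fun i _ => (w.getVert i).2,
    fun i hi => w.adj_getVert_succ hi⟩
end

section
/- An antimatroidal point set S in the plane is closed under componentwise minimum (intersection): if (x_A,y_A) ∈ S and (x_B,y_B) ∈ S then (min(x_A,x_B), min(y_A,y_B)) ∈ S. -/
namespace IsAntimatroidal

variable {S : Set (ℕ × ℕ)}

theorem accessible_s6 (h : IsAntimatroidal S) {x y : ℕ} (hxy : (x, y) ∈ S) (hne : (x, y) ≠ (0, 0)) :
    (1 ≤ x ∧ (x - 1, y) ∈ S) ∨ (1 ≤ y ∧ (x, y - 1) ∈ S) :=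
  h.2.2.1 x y hxy hne

theorem mk_succ_mem_of_lt (h : IsAntimatroidal S) {a₁ a₂ b₁ b₂ : ℕ} (ha : (a₁, a₂) ∈ S)
    (hb : (b₁, b₂) ∈ S) (h₁ : b₁ < a₁) (h₂ : a₂ ≤ b₂) : (b₁ + 1, b₂) ∈ S :=
  (h.2.2.2 a₁ a₂ b₁ b₂ ha hb (fun hle => by omega)).2.2 ⟨h₁.le, h₂⟩

theorem mk_mem_of_le_of_le (h : IsAntimatroidal S) {a₁ a₂ b₁ b₂ : ℕ} (ha : (a₁, a₂) ∈ S)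
    (hb : (b₁, b₂) ∈ S) (h₁ : a₁ ≤ b₁) (h₂ : b₂ ≤ a₂) : (a₁, b₂) ∈ S := by
  obtain rfl | hlt := h₂.eq_or_lt
  · exact ha
  rcases h.accessible_s6 ha (by simp; omega) with ⟨hx, hleft⟩ | ⟨-, hdown⟩
  · have hcorner : (a₁ - 1, b₂) ∈ S := h.mk_mem_of_le_of_le hleft hb (by omega) h₂
    simpa [Nat.sub_add_cancel hx] using h.mk_succ_mem_of_lt hb hcorner (by omega) le_rfl
  · exact h.mk_mem_of_le_of_le hdown hb h₁ (by omega)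
termination_by a₁ + a₂

end IsAntimatroidal

theorem closed_under_intersection (S : Set (ℕ × ℕ)) (h : IsAntimatroidal S)
    (A B : ℕ × ℕ) (hA : A ∈ S) (hB : B ∈ S) :
    (min A.1 B.1, min A.2 B.2) ∈ S := by
  rcases le_total A.1 B.1 with h₁ | h₁ <;> rcases le_total A.2 B.2 with h₂ | h₂
  · simpa [min_eq_left h₁, min_eq_left h₂] using hA
  · simpa [min_eq_left h₁, min_eq_right h₂] using h.mk_mem_of_le_of_le hA hB h₁ h₂
  · simpa [min_eq_right h₁, min_eq_left h₂] using h.mk_mem_of_le_of_le hB hA h₁ h₂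
  · simpa [min_eq_right h₁, min_eq_right h₂] using hB
end

section
/- In an antimatroidal point set S, for any two componentwise incomparable points A and B of S, the entire rectangle of lattice points between A ∩ B = (min(x_A,x_B), min(y_A,y_B)) and A ∪ B = (max(x_A,x_B), max(y_A,y_B)) is contained in S. -/
namespace IsAntimatroidal

variable {S : Set (ℕ × ℕ)}

theorem step_right_mem (h : IsAntimatroidal S) {a₁ a₂ x y : ℕ} (hA : (a₁, a₂) ∈ S)
    (hP : (x, y) ∈ S) (hx : x < a₁) (hy : a₂ ≤ y) : (x + 1, y) ∈ S :=
  (h.2.2.2 a₁ a₂ x y hA hP (by omega)).2.2 ⟨hx.le, hy⟩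

theorem step_up_mem (h : IsAntimatroidal S) {b₁ b₂ x y : ℕ} (hB : (b₁, b₂) ∈ S)
    (hP : (x, y) ∈ S) (hx : b₁ ≤ x) (hy : y < b₂) : (x, y + 1) ∈ S :=
  (h.2.2.2 b₁ b₂ x y hB hP (by omega)).2.1 ⟨hx, hy.le⟩

theorem corner_mem (h : IsAntimatroidal S) {a₁ a₂ b₁ b₂ : ℕ} (hA : (a₁, a₂) ∈ S)
    (hB : (b₁, b₂) ∈ S) (h₁ : b₁ < a₁) (h₂ : a₂ < b₂) : (b₁, a₂) ∈ S := by
  have hA₀ : (a₁, a₂) ≠ (0, 0) := by simp only [ne_eq, Prod.mk.injEq]; omega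
  rcases h.2.2.1 a₁ a₂ hA hA₀ with ⟨-, hleft⟩ | ⟨ha₂, hdown⟩
  · obtain heq | hlt := (Nat.le_sub_one_of_lt h₁).eq_or_lt
    · rwa [heq]
    · exact h.corner_mem hleft hB hlt h₂
  · have hbelow := h.corner_mem hdown hB h₁ (by omega)
    simpa only [Nat.sub_add_cancel ha₂] using h.step_up_mem hB hbelow le_rfl (by omega)
termination_by a₁ + a₂

theorem Icc_prod_Icc_subset (h : IsAntimatroidal S) {a₁ a₂ b₁ b₂ : ℕ} (hA : (a₁, a₂) ∈ S)
    (hB : (b₁, b₂) ∈ S) (h₁ : b₁ < a₁) (h₂ : a₂ < b₂) :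
    Set.Icc b₁ a₁ ×ˢ Set.Icc a₂ b₂ ⊆ S := by
  have left_edge : ∀ y, a₂ ≤ y → y ≤ b₂ → (b₁, y) ∈ S := by
    refine Nat.le_induction (fun _ => h.corner_mem hA hB h₁ h₂) fun y _ ih hy => ?_
    exact h.step_up_mem hB (ih (by omega)) le_rfl (by omega)
  rintro ⟨x, y⟩ ⟨⟨hx₁, hx₂⟩, hy₁, hy₂⟩
  induction x, hx₁ using Nat.le_induction with
  | base => exact left_edge y hy₁ hy₂
  | succ x _ ih => exact h.step_right_mem hA (ih (by omega) hy₁ hy₂) (by omega) hy₁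

end IsAntimatroidal

theorem rectangle_subset (S : Set (ℕ × ℕ)) (h : IsAntimatroidal S)
    (A B : ℕ × ℕ) (hA : A ∈ S) (hB : B ∈ S)
    (hAB : ¬(A.1 ≤ B.1 ∧ A.2 ≤ B.2)) (hBA : ¬(B.1 ≤ A.1 ∧ B.2 ≤ A.2)) :
    ∀ x y, min A.1 B.1 ≤ x → x ≤ max A.1 B.1 →
      min A.2 B.2 ≤ y → y ≤ max A.2 B.2 → (x, y) ∈ S := by
  obtain ⟨a₁, a₂⟩ := A
  obtain ⟨b₁, b₂⟩ := B
  simp only at hAB hBA ⊢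
  intro x y hx₁ hx₂ hy₁ hy₂
  rcases (by omega : (b₁ < a₁ ∧ a₂ < b₂) ∨ (a₁ < b₁ ∧ b₂ < a₂)) with ⟨h₁, h₂⟩ | ⟨h₁, h₂⟩
  · exact h.Icc_prod_Icc_subset hA hB h₁ h₂ ⟨⟨by omega, by omega⟩, by omega, by omega⟩
  · exact h.Icc_prod_Icc_subset hB hA h₁ h₂ ⟨⟨by omega, by omega⟩, by omega, by omega⟩
end

section
/- Let S be an antimatroidal point set with lower boundary B_lower = {(x,y) ∈ S : (x+1,y) ∉ S ∨ (x,y-1) ∉ S ∨ (x+1,y-1) ∉ S}. Then any two points of B_lower are componentwise comparable; that is, B_lower, listed in lexicographic order, forms a monotone increasing sequence from (0,0) to (x_max, y_max). -/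
/-- `p` belongs to the lower boundary of `S`: `p ∈ S` and one of the points
`(x+1,y)`, `(x,y-1)`, `(x+1,y-1)` is missing from `S` (points with a negative
coordinate, i.e. when `y = 0`, count as missing). -/
def InLowerBoundary (S : Set (ℕ × ℕ)) (p : ℕ × ℕ) : Prop :=
  p ∈ S ∧ ((p.1 + 1, p.2) ∉ S ∨ (p.2 = 0 ∨ (p.1, p.2 - 1) ∉ S) ∨
    (p.2 = 0 ∨ (p.1 + 1, p.2 - 1) ∉ S))

namespace IsAntimatroidal

variable {S : Set (ℕ × ℕ)}

theorem mem_succ_snd (hS : IsAntimatroidal S) {a₁ a₂ b₁ b₂ : ℕ} (ha : (a₁, a₂) ∈ S)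
    (hb : (b₁, b₂) ∈ S) (h₁ : a₁ ≤ b₁) (h₂ : b₂ < a₂) : (b₁, b₂ + 1) ∈ S :=
  (hS.2.2.2 a₁ a₂ b₁ b₂ ha hb (by omega)).2.1 ⟨h₁, h₂.le⟩

theorem mem_succ_fst (hS : IsAntimatroidal S) {a₁ a₂ b₁ b₂ : ℕ} (ha : (a₁, a₂) ∈ S)
    (hb : (b₁, b₂) ∈ S) (h₁ : b₁ < a₁) (h₂ : a₂ ≤ b₂) : (b₁ + 1, b₂) ∈ S :=
  (hS.2.2.2 a₁ a₂ b₁ b₂ ha hb (by omega)).2.2 ⟨h₁.le, h₂⟩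

theorem mem_vertical_segment (hS : IsAntimatroidal S) {a₁ a₂ b₁ b₂ : ℕ} (ha : (a₁, a₂) ∈ S)
    (hb : (b₁, b₂) ∈ S) (h₁ : a₁ ≤ b₁) {y : ℕ} (hby : b₂ ≤ y) (hya : y ≤ a₂) :
    (b₁, y) ∈ S := by
  induction y, hby using Nat.le_induction with
  | base => exact hb
  | succ y hby ih => exact hS.mem_succ_snd ha (ih (by omega)) h₁ (by omega)

theorem mem_horizontal_segment (hS : IsAntimatroidal S) {a₁ a₂ b₁ b₂ : ℕ} (ha : (a₁, a₂) ∈ S)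
    (hb : (b₁, b₂) ∈ S) (h₂ : a₂ ≤ b₂) {x : ℕ} (hbx : b₁ ≤ x) (hxa : x ≤ a₁) :
    (x, b₂) ∈ S := by
  induction x, hbx using Nat.le_induction with
  | base => exact hb
  | succ x hbx ih => exact hS.mem_succ_fst ha (ih (by omega)) (by omega) h₂

theorem exists_le_mem_of_mem_succ_snd (hS : IsAntimatroidal S) {x y : ℕ}
    (h : (x, y + 1) ∈ S) : ∃ x' ≤ x, (x', y) ∈ S := by
  induction x with
  | zero =>
    rcases hS.2.2.1 0 (y + 1) h (by simp) with ⟨h0, -⟩ | ⟨-, hy⟩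
    · omega
    · exact ⟨0, le_rfl, hy⟩
  | succ x ih =>
    rcases hS.2.2.1 (x + 1) (y + 1) h (by simp) with ⟨-, hx⟩ | ⟨-, hy⟩
    · obtain ⟨x', hx', hmem⟩ := ih hx
      exact ⟨x', by omega, hmem⟩
    · exact ⟨x + 1, le_rfl, hy⟩

theorem not_inLowerBoundary_of_lt_of_lt (hS : IsAntimatroidal S) {p q : ℕ × ℕ} (hq : q ∈ S)
    (h₁ : p.1 < q.1) (h₂ : q.2 < p.2) : ¬InLowerBoundary S p := by
  obtain ⟨a, b⟩ := p
  obtain ⟨c, d⟩ := q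
  obtain ⟨b, rfl⟩ : ∃ b', b = b' + 1 := ⟨b - 1, by simp only at h₂; omega⟩
  simp only at h₁ h₂
  rintro ⟨hp, hboundary⟩
  have hright : (a + 1, b + 1) ∈ S := hS.mem_succ_fst hq hp h₁ h₂.le
  have hcolumn : (c, b) ∈ S := hS.mem_vertical_segment hp hq h₁.le (by omega) (by omega)
  obtain ⟨x₀, hx₀, hrow⟩ := hS.exists_le_mem_of_mem_succ_snd hp
  have hbelow : (a, b) ∈ S := hS.mem_horizontal_segment hcolumn hrow le_rfl hx₀ h₁.le
  have hdiag : (a + 1, b) ∈ S := hS.mem_horizontal_segment hcolumn hrow le_rfl (by omega) h₁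
  simp_all

end IsAntimatroidal

theorem lower_boundary_monotone (S : Set (ℕ × ℕ)) (h : IsAntimatroidal S)
    (p q : ℕ × ℕ) (hp : InLowerBoundary S p) (hq : InLowerBoundary S q) :
    (p.1 ≤ q.1 ∧ p.2 ≤ q.2) ∨ (q.1 ≤ p.1 ∧ q.2 ≤ p.2) := by
  by_contra hincomp
  rcases lt_or_ge p.1 q.1 with hlt | hge
  · exact h.not_inLowerBoundary_of_lt_of_lt hq.1 hlt (by omega) hp
  · exact h.not_inLowerBoundary_of_lt_of_lt hp.1 (by omega) (by omega) hq
end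

section
/- Let S be an antimatroidal point set and B_lower its lower boundary. For every (x,y) ∈ B_lower: (i) if (x,z) ∈ S and (x,z) ∉ B_lower then z > y; (ii) if (z,y) ∈ S and (z,y) ∉ B_lower then z < x. -/
/-!
An interior point `(x, z)` has its three lower-right neighbours `(x+1, z)`, `(x, z-1)`,
`(x+1, z-1)` in `S`. The exchange axiom pushes a point of `S` up its column towards the height
of a point of `S` weakly to its left, and one step right along its row towards a point of `S`
further right; with accessibility it also shows that `S` is closed under componentwise minima.
These moves carry the three neighbours of an interior point `(x, z)` with `z < y`, or `(z, y)`
with `x < z`, to those of `(x, y)`, so `(x, y)` would be interior as well.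
-/

theorem not_inLowerBoundary_iff {S : Set (ℕ × ℕ)} {x y : ℕ} (hp : (x, y) ∈ S) :
    ¬ InLowerBoundary S (x, y) ↔
      y ≠ 0 ∧ (x + 1, y) ∈ S ∧ (x, y - 1) ∈ S ∧ (x + 1, y - 1) ∈ S := by
  simp only [InLowerBoundary, hp, true_and, not_or, not_not]
  tauto

namespace IsAntimatroidal

variable {S : Set (ℕ × ℕ)} (h : IsAntimatroidal S)
include h

theorem right_mem_of_lt {c d w : ℕ} (hc : (c, w) ∈ S) (hd : (d, w) ∈ S) (hdc : d < c) :
    (d + 1, w) ∈ S :=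
  (h.2.2.2 c w d w hc hd (by omega)).2.2 ⟨hdc.le, le_rfl⟩

theorem up_mem_of_lt {x y x' w : ℕ} (hxy : (x, y) ∈ S) (hw : (x', w) ∈ S)
    (hx : x ≤ x') (hwy : w < y) : (x', w + 1) ∈ S :=
  (h.2.2.2 x y x' w hxy hw (by omega)).2.1 ⟨hx, hwy.le⟩

theorem up_mem_of_le {x y x' w v : ℕ} (hxy : (x, y) ∈ S) (hw : (x', w) ∈ S)
    (hx : x ≤ x') (hwv : w ≤ v) (hvy : v ≤ y) : (x', v) ∈ S := by
  induction v, hwv using Nat.le_induction with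
  | base => exact hw
  | succ v hwv ih => exact h.up_mem_of_lt hxy (ih (by omega)) hx (by omega)

theorem inf_mem_of_le {x y z w : ℕ} (hxy : (x, y) ∈ S) (hzw : (z, w) ∈ S)
    (hxz : x ≤ z) (hwy : w ≤ y) : (x, w) ∈ S := by
  induction hn : x + y using Nat.strong_induction_on generalizing x y with
  | _ n ih =>
    obtain rfl | hwy := hwy.eq_or_lt
    · exact hxy
    rcases h.2.2.1 x y hxy (by simp only [ne_eq, Prod.mk.injEq]; omega) with
      ⟨hx, hleft⟩ | ⟨-, hdown⟩
    · have hleft_w : (x - 1, w) ∈ S := ih _ (by omega) hleft (by omega) (by omega) rfl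
      simpa [Nat.sub_add_cancel hx] using h.right_mem_of_lt hzw hleft_w (by omega)
    · exact ih _ (by omega) hdown hxz (by omega) rfl

theorem not_inLowerBoundary_of_below {x y z : ℕ} (hxy : (x, y) ∈ S) (hzy : z < y)
    (hxz : (x, z) ∈ S) (hint : ¬ InLowerBoundary S (x, z)) :
    ¬ InLowerBoundary S (x, y) := by
  obtain ⟨-, hright, hdown, hdiag⟩ := (not_inLowerBoundary_iff hxz).1 hint
  exact (not_inLowerBoundary_iff hxy).2
    ⟨by omega, h.up_mem_of_le hxy hright (by omega) (by omega) le_rfl,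
      h.up_mem_of_le hxy hdown le_rfl (by omega) (by omega),
      h.up_mem_of_le hxy hdiag (by omega) (by omega) (by omega)⟩

theorem not_inLowerBoundary_of_left {x y z : ℕ} (hxy : (x, y) ∈ S) (hxz : x < z)
    (hzy : (z, y) ∈ S) (hint : ¬ InLowerBoundary S (z, y)) :
    ¬ InLowerBoundary S (x, y) := by
  obtain ⟨hy, -, hdown, -⟩ := (not_inLowerBoundary_iff hzy).1 hint
  have hdown_x : (x, y - 1) ∈ S := h.inf_mem_of_le hxy hdown hxz.le (by omega)
  exact (not_inLowerBoundary_iff hxy).2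
    ⟨hy, h.right_mem_of_lt hzy hxy hxz, hdown_x, h.right_mem_of_lt hdown hdown_x hxz⟩

end IsAntimatroidal

theorem lower_boundary_extremal (S : Set (ℕ × ℕ)) (h : IsAntimatroidal S)
    (x y : ℕ) (hxy : InLowerBoundary S (x, y)) :
    (∀ z, (x, z) ∈ S → ¬ InLowerBoundary S (x, z) → y < z) ∧
    (∀ z, (z, y) ∈ S → ¬ InLowerBoundary S (z, y) → z < x) := by
  constructor
  · intro z hz hint
    by_contra! hzy
    obtain rfl | hzy := hzy.eq_or_lt
    · exact hint hxy
    · exact h.not_inLowerBoundary_of_below hxy.1 hzy hz hint hxy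
  · intro z hz hint
    by_contra! hxz
    obtain rfl | hxz := hxz.eq_or_lt
    · exact hint hxy
    · exact h.not_inLowerBoundary_of_left hxy.1 hxz hz hint hxy
end

section
/- Let S ⊆ ℕ² be a finite orthogonally convex N₄-connected set that is bounded by two monotone increasing N₄-paths from (0,0) to (x_max,y_max) (i.e., S lies between, and contains, two such lattice paths sharing endpoints). Then S is an antimatroidal point set, i.e., S satisfies accessibility (A1) and the exchange property (A2). -/
/-- `f 0, f 1, ..., f k` is a monotone increasing `N₄`-path starting at `(0,0)`:
each point is obtained from the previous one by incrementing one coordinate. -/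
def MonoPath (f : ℕ → ℕ × ℕ) (k : ℕ) : Prop :=
  f 0 = (0, 0) ∧
  ∀ i < k, f (i + 1) = ((f i).1 + 1, (f i).2) ∨ f (i + 1) = ((f i).1, (f i).2 + 1)

/-- `S` is orthogonally convex: its intersection with every horizontal and
every vertical line is an interval. -/
def OrthoConvex (S : Set (ℕ × ℕ)) : Prop :=
  (∀ y x₁ x₂ x, (x₁, y) ∈ S → (x₂, y) ∈ S → x₁ ≤ x → x ≤ x₂ → (x, y) ∈ S) ∧
  (∀ x y₁ y₂ y, (x, y₁) ∈ S → (x, y₂) ∈ S → y₁ ≤ y → y ≤ y₂ → (x, y) ∈ S)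

/-- Any two points of `S` are joined by an `N₄`-path inside `S`. -/
def N4Connected (S : Set (ℕ × ℕ)) : Prop :=
  ∀ A ∈ S, ∀ B ∈ S, ∃ (n : ℕ) (f : ℕ → ℕ × ℕ), f 0 = A ∧ f n = B ∧
    (∀ i ≤ n, f i ∈ S) ∧ (∀ i < n, N4Step (f i) (f (i + 1)))

/-- `S` is bounded by two monotone increasing `N₄`-paths (a lower one and an
upper one) from `(0,0)` to `(xmax, ymax)`: both paths lie in `S`, share their
endpoints, and every point of `S` lies (columnwise) between them. -/
def BoundedByTwoMonotonePaths (S : Set (ℕ × ℕ)) : Prop :=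
  ∃ (xmax ymax kl ku : ℕ) (fl fu : ℕ → ℕ × ℕ),
    MonoPath fl kl ∧ MonoPath fu ku ∧
    fl kl = (xmax, ymax) ∧ fu ku = (xmax, ymax) ∧
    (∀ i ≤ kl, fl i ∈ S) ∧ (∀ i ≤ ku, fu i ∈ S) ∧
    (∀ p ∈ S, p.1 ≤ xmax ∧ p.2 ≤ ymax) ∧
    (∀ p ∈ S, (∃ i ≤ kl, (fl i).1 = p.1 ∧ (fl i).2 ≤ p.2) ∧
              (∃ j ≤ ku, (fu j).1 = p.1 ∧ p.2 ≤ (fu j).2))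


/-!
The lower boundary path gives accessibility: a point of `S` either lies on that path, where its
predecessor along the path is in `S`, or lies strictly above the path in its column, where vertical
convexity puts the point just below it in `S`. Dually, the upper path gives every point other than
`(xmax, ymax)` a successor in `S`, and it reaches every column to the right of a point at a height
at least that of the point. The three exchange cases follow from these two facts together with
orthogonal convexity.
-/

namespace MonoPath

variable {f : ℕ → ℕ × ℕ} {k : ℕ}

theorem of_le (hf : MonoPath f k) {k' : ℕ} (hk : k' ≤ k) : MonoPath f k' :=
  ⟨hf.1, fun i hi => hf.2 i (by omega)⟩

theorem le_of_le (hf : MonoPath f k) {i j : ℕ} (hij : i ≤ j) (hjk : j ≤ k) : f i ≤ f j := by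
  induction j, hij using Nat.le_induction with
  | base => exact le_rfl
  | succ j hij ih =>
    refine (ih (by omega)).trans ?_
    rcases hf.2 j (by omega) with h | h <;> rw [h] <;> exact ⟨by simp, by simp⟩

theorem exists_fst_eq (hf : MonoPath f k) {j₀ c : ℕ} (hj₀ : j₀ ≤ k) (hc₀ : (f j₀).1 ≤ c)
    (hck : c ≤ (f k).1) : ∃ j, j₀ ≤ j ∧ j ≤ k ∧ (f j).1 = c ∧ (f j₀).2 ≤ (f j).2 := by
  induction k with
  | zero =>
    obtain rfl : j₀ = 0 := by omega
    exact ⟨0, le_rfl, le_rfl, by omega, le_rfl⟩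
  | succ k ih =>
    by_cases hjk : j₀ ≤ k ∧ c ≤ (f k).1
    · obtain ⟨j, hj⟩ := ih (hf.of_le k.le_succ) hjk.1 hjk.2
      exact ⟨j, hj.1, by omega, hj.2.2⟩
    · refine ⟨k + 1, by omega, le_rfl, ?_, (hf.le_of_le hj₀ le_rfl).2⟩
      rcases Nat.lt_or_ge k j₀ with hj | hj
      · obtain rfl : j₀ = k + 1 := by omega
        omega
      · rcases hf.2 k (by omega) with h | h <;> rw [h] at hck ⊢ <;> simp at hck ⊢ <;> omega

end MonoPath

section BoundedByPaths

variable {S : Set (ℕ × ℕ)} {f : ℕ → ℕ × ℕ} {k : ℕ}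

theorem exists_pred_mem_of_above_path (hconv : OrthoConvex S) (hf : MonoPath f k)
    (hfS : ∀ i ≤ k, f i ∈ S) {x y i : ℕ} (hxy : (x, y) ∈ S) (hne : (x, y) ≠ (0, 0))
    (hi : i ≤ k) (hix : (f i).1 = x) (hiy : (f i).2 ≤ y) :
    (1 ≤ x ∧ (x - 1, y) ∈ S) ∨ (1 ≤ y ∧ (x, y - 1) ∈ S) := by
  rcases hiy.lt_or_eq with hlt | heq
  · have hfi : (x, (f i).2) ∈ S := hix ▸ hfS i hi
    exact .inr ⟨by omega, hconv.2 x _ y _ hfi hxy (by omega) (by omega)⟩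
  · have hfi : f i = (x, y) := Prod.ext hix heq
    obtain ⟨m, rfl⟩ : ∃ m, i = m + 1 :=
      Nat.exists_eq_succ_of_ne_zero (by rintro rfl; exact hne (hfi ▸ hf.1))
    have hm := hfS m (by omega)
    rcases hf.2 m (by omega) with h | h <;> rw [hfi, Prod.ext_iff] at h <;> simp only at h
    · exact .inl ⟨by omega, by rwa [show (x - 1, y) = f m from Prod.ext (by omega) (by omega)]⟩
    · exact .inr ⟨by omega, by rwa [show (x, y - 1) = f m from Prod.ext (by omega) (by omega)]⟩

theorem exists_succ_mem_of_below_path (hconv : OrthoConvex S) (hf : MonoPath f k)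
    (hfS : ∀ i ≤ k, f i ∈ S) {x y j : ℕ} (hxy : (x, y) ∈ S) (hne : (x, y) ≠ f k)
    (hj : j ≤ k) (hjx : (f j).1 = x) (hjy : y ≤ (f j).2) :
    (x + 1, y) ∈ S ∨ (x, y + 1) ∈ S := by
  rcases hjy.lt_or_eq with hlt | heq
  · have hfj : (x, (f j).2) ∈ S := hjx ▸ hfS j hj
    exact .inr (hconv.2 x y _ _ hxy hfj (by omega) (by omega))
  · have hfj : f j = (x, y) := Prod.ext hjx heq.symm
    have hjk : j < k := lt_of_le_of_ne hj (by rintro rfl; exact hne hfj.symm)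
    rcases hf.2 j hjk with h | h <;> rw [hfj] at h <;> rw [← h] <;> simp [hfS (j + 1) hjk]

end BoundedByPaths

namespace BoundedByTwoMonotonePaths

variable {S : Set (ℕ × ℕ)}

theorem exists_pred_mem (hconv : OrthoConvex S) (hbd : BoundedByTwoMonotonePaths S) {x y : ℕ}
    (hxy : (x, y) ∈ S) (hne : (x, y) ≠ (0, 0)) :
    (1 ≤ x ∧ (x - 1, y) ∈ S) ∨ (1 ≤ y ∧ (x, y - 1) ∈ S) := by
  obtain ⟨_, _, _, _, fl, _, hfl, -, -, -, hflS, -, -, hwit⟩ := hbd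
  obtain ⟨i, hi, hix, hiy⟩ := (hwit _ hxy).1
  exact exists_pred_mem_of_above_path hconv hfl hflS hxy hne hi hix hiy

theorem exists_succ_mem (hconv : OrthoConvex S) (hbd : BoundedByTwoMonotonePaths S) {a b : ℕ × ℕ}
    (ha : a ∈ S) (hb : b ∈ S) (hab : ¬a ≤ b) : (b.1 + 1, b.2) ∈ S ∨ (b.1, b.2 + 1) ∈ S := by
  obtain ⟨_, _, _, ku, _, fu, -, hfu, -, hfuend, -, hfuS, hbound, hwit⟩ := hbd
  obtain ⟨j, hj, hjx, hjy⟩ := (hwit b hb).2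
  refine exists_succ_mem_of_below_path hconv hfu hfuS hb ?_ hj hjx hjy
  intro hb_end
  apply hab
  rw [← Prod.mk.eta (p := b), hb_end, hfuend]
  exact hbound a ha

theorem exists_mem_above (hbd : BoundedByTwoMonotonePaths S) {p q : ℕ × ℕ} (hp : p ∈ S)
    (hq : q ∈ S) (hpq : p.1 ≤ q.1) : ∃ h, p.2 ≤ h ∧ (q.1, h) ∈ S := by
  obtain ⟨_, _, _, ku, _, fu, -, hfu, -, hfuend, -, hfuS, hbound, hwit⟩ := hbd
  obtain ⟨j₀, hj₀, hj₀x, hj₀y⟩ := (hwit p hp).2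
  obtain ⟨j, -, hj, hjx, hjy⟩ :=
    hfu.exists_fst_eq hj₀ (hj₀x ▸ hpq) (by simpa [hfuend] using (hbound q hq).1)
  exact ⟨(fu j).2, hj₀y.trans hjy, hjx ▸ hfuS j hj⟩

end BoundedByTwoMonotonePaths

open BoundedByTwoMonotonePaths in
theorem geometric_implies_antimatroidal_general (S : Set (ℕ × ℕ))
    (hconv : OrthoConvex S)
    (hbd : BoundedByTwoMonotonePaths S) :
    (∀ x y, (x, y) ∈ S → (x, y) ≠ (0, 0) →
      (1 ≤ x ∧ (x - 1, y) ∈ S) ∨ (1 ≤ y ∧ (x, y - 1) ∈ S)) ∧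
    (∀ a₁ a₂ b₁ b₂, (a₁, a₂) ∈ S → (b₁, b₂) ∈ S → ¬(a₁ ≤ b₁ ∧ a₂ ≤ b₂) →
      ((b₁ ≤ a₁ ∧ b₂ ≤ a₂) → ((b₁ + 1, b₂) ∈ S ∨ (b₁, b₂ + 1) ∈ S)) ∧
      ((a₁ ≤ b₁ ∧ b₂ ≤ a₂) → (b₁, b₂ + 1) ∈ S) ∧
      ((b₁ ≤ a₁ ∧ a₂ ≤ b₂) → (b₁ + 1, b₂) ∈ S)) := by
  refine ⟨fun x y hxy hne => exists_pred_mem hconv hbd hxy hne,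
    fun a₁ a₂ b₁ b₂ ha hb hab => ⟨fun _ => exists_succ_mem hconv hbd ha hb hab, ?_, ?_⟩⟩
  · rintro ⟨h₁, h₂⟩
    obtain ⟨h, hah, hbh⟩ := exists_mem_above hbd ha hb h₁
    exact hconv.2 b₁ b₂ h _ hb hbh (by omega) (by simp only at hah; omega)
  · rintro ⟨h₁, h₂⟩
    obtain ⟨h, hbh, hah⟩ := exists_mem_above hbd hb ha h₁
    have hab₂ : (a₁, b₂) ∈ S := hconv.2 a₁ a₂ h b₂ ha hah h₂ hbh
    exact hconv.1 b₂ b₁ a₁ _ hb hab₂ (by omega) (by omega)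

theorem geometric_implies_antimatroidal (S : Set (ℕ × ℕ))
    (hfin : S.Finite) (hconv : OrthoConvex S) (hconn : N4Connected S)
    (hbd : BoundedByTwoMonotonePaths S) :
    (∀ x y, (x, y) ∈ S → (x, y) ≠ (0, 0) →
      (1 ≤ x ∧ (x - 1, y) ∈ S) ∨ (1 ≤ y ∧ (x, y - 1) ∈ S)) ∧
    (∀ a₁ a₂ b₁ b₂, (a₁, a₂) ∈ S → (b₁, b₂) ∈ S → ¬(a₁ ≤ b₁ ∧ a₂ ≤ b₂) →
      ((b₁ ≤ a₁ ∧ b₂ ≤ a₂) → ((b₁ + 1, b₂) ∈ S ∨ (b₁, b₂ + 1) ∈ S)) ∧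
      ((a₁ ≤ b₁ ∧ b₂ ≤ a₂) → (b₁, b₂ + 1) ∈ S) ∧
      ((b₁ ≤ a₁ ∧ a₂ ≤ b₂) → (b₁ + 1, b₂) ∈ S)) :=
  geometric_implies_antimatroidal_general S hconv hbd
end

section
/- A set S of points in ℕ² is an antimatroidal point set if and only if S is a finite orthogonally convex N₄-connected set bounded by two monotone increasing N₄-paths between (0,0) and (x_max,y_max). -/
/-!
Accessibility gives every point of an antimatroidal set a monotone path from the origin inside
the set; this yields connectivity and shows that no column up to `xmax` is empty. Repeated
exchanges fill in horizontal and vertical segments, which is orthogonal convexity. By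
accessibility the column minima rise from left to right, and the height of the set left of a
column rises trivially; the staircases of these two profiles are the bounding paths.

Conversely, a point of `S` is either above the lower path, and then the point below it is in
`S` by convexity, or on it, and then its predecessor on the path is in `S`; dually the upper
path provides successors. The other cases of the exchange property follow by walking along a
bounding path to the required column and using vertical convexity.
-/

def MonoStep (p q : ℕ × ℕ) : Prop :=
  q = (p.1 + 1, p.2) ∨ q = (p.1, p.2 + 1)

namespace MonoStep

variable {p q : ℕ × ℕ}

theorem le (h : MonoStep p q) : p ≤ q := by
  rcases h with rfl | rfl <;> simp [Prod.le_def]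

theorem fst_le (h : MonoStep p q) : q.1 ≤ p.1 + 1 := by
  rcases h with rfl | rfl <;> simp

theorem fst_add_snd (h : MonoStep p q) : q.1 + q.2 = p.1 + p.2 + 1 := by
  rcases h with rfl | rfl <;> simp <;> omega

theorem n4Step (h : MonoStep p q) : N4Step p q := by
  rcases h with rfl | rfl <;> simp [N4Step]

end MonoStep

namespace MonoPath

variable {f : ℕ → ℕ × ℕ} {k : ℕ}

theorem step (h : MonoPath f k) {i : ℕ} (hi : i < k) : MonoStep (f i) (f (i + 1)) :=
  h.2 i hi

theorem of_le_s12 (h : MonoPath f k) {l : ℕ} (hl : l ≤ k) : MonoPath f l :=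
  ⟨h.1, fun i hi => h.2 i (by omega)⟩

theorem snoc (h : MonoPath f k) {q : ℕ × ℕ} (hq : MonoStep (f k) q) :
    MonoPath (Function.update f (k + 1) q) (k + 1) := by
  refine ⟨by simp [h.1], fun i hi => show MonoStep _ _ from ?_⟩
  rcases Nat.lt_succ_iff_lt_or_eq.1 hi with hi | rfl
  · rw [Function.update_of_ne (by omega), Function.update_of_ne (by omega)]
    exact h.step hi
  · rwa [Function.update_self, Function.update_of_ne (by omega)]

theorem monotone (h : MonoPath f k) {i j : ℕ} (hij : i ≤ j) (hj : j ≤ k) : f i ≤ f j := by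
  induction j, hij using Nat.le_induction with
  | base => exact le_rfl
  | succ j _ ih => exact (ih (by omega)).trans (h.step (by omega)).le

theorem fst_add_snd (h : MonoPath f k) {i : ℕ} (hi : i ≤ k) : (f i).1 + (f i).2 = i := by
  induction i with
  | zero => simp [h.1]
  | succ i ih => rw [(h.step (by omega)).fst_add_snd, ih (by omega)]

theorem exists_fst_eq_s12 (h : MonoPath f k) {i x : ℕ} (hi : i ≤ k) (hix : (f i).1 ≤ x)
    (hxk : x ≤ (f k).1) : ∃ j, i ≤ j ∧ j ≤ k ∧ (f j).1 = x := by
  induction k with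
  | zero =>
    obtain rfl : i = 0 := by omega
    exact ⟨0, le_rfl, le_rfl, by omega⟩
  | succ k ih =>
    rcases hi.lt_or_eq with hi | rfl
    · rcases le_or_gt x (f k).1 with hx | hx
      · obtain ⟨j, hij, hjk, hj⟩ := ih (h.of_le_s12 k.le_succ) (by omega) hx
        exact ⟨j, hij, by omega, hj⟩
      · have := (h.step k.lt_succ_self).fst_le
        exact ⟨k + 1, by omega, le_rfl, by omega⟩
    · exact ⟨_, le_rfl, le_rfl, by omega⟩

end MonoPath

def N4Joined (S : Set (ℕ × ℕ)) (A B : ℕ × ℕ) : Prop :=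
  ∃ (n : ℕ) (f : ℕ → ℕ × ℕ), f 0 = A ∧ f n = B ∧
    (∀ i ≤ n, f i ∈ S) ∧ (∀ i < n, N4Step (f i) (f (i + 1)))

namespace N4Joined

variable {S : Set (ℕ × ℕ)} {A B C : ℕ × ℕ}

theorem symm (h : N4Joined S A B) : N4Joined S B A := by
  obtain ⟨n, f, hA, hB, hS, hf⟩ := h
  refine ⟨n, fun i => f (n - i), by simpa, by simpa, fun i _ => hS _ (by omega), fun i hi => ?_⟩
  have := (hf (n - (i + 1)) (by omega)).symm
  rwa [show n - (i + 1) + 1 = n - i by omega] at this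

theorem trans (h₁ : N4Joined S A B) (h₂ : N4Joined S B C) : N4Joined S A C := by
  obtain ⟨n, f, hfA, hfB, hfS, hf⟩ := h₁
  obtain ⟨m, g, hgB, hgC, hgS, hg⟩ := h₂
  refine ⟨n + m, fun i => if i < n then f i else g (i - n), ?_, by simpa, fun i hi => ?_,
    fun i hi => ?_⟩
  · rcases n.eq_zero_or_pos with rfl | hn
    · simp [← hfA, hfB, hgB]
    · simp [hn, hfA]
  · dsimp only
    split_ifs
    exacts [hfS i (by omega), hgS _ (by omega)]
  · dsimp only
    by_cases hin : i + 1 < n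
    · rw [if_pos hin, if_pos (by omega)]
      exact hf i (by omega)
    by_cases hi' : i < n
    · obtain rfl : n = i + 1 := by omega
      rw [if_pos hi', if_neg hin, Nat.sub_self, hgB, ← hfB]
      exact hf i hi'
    · rw [if_neg hi', if_neg hin, show i + 1 - n = i - n + 1 by omega]
      exact hg _ (by omega)

end N4Joined

theorem MonoPath.n4Joined {S : Set (ℕ × ℕ)} {f : ℕ → ℕ × ℕ} {k : ℕ} (h : MonoPath f k)
    (hS : ∀ i ≤ k, f i ∈ S) : N4Joined S (0, 0) (f k) :=
  ⟨k, f, h.1, rfl, hS, fun _ hi => (h.step hi).n4Step⟩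

def OnStaircase (e : ℕ → ℕ) (p : ℕ × ℕ) : Prop :=
  e p.1 ≤ p.2 ∧ p.2 ≤ e (p.1 + 1)

/-- The monotone path that climbs column `x` from height `e x` to height `e (x + 1)` and then
steps right. -/
def staircase (e : ℕ → ℕ) : ℕ → ℕ × ℕ
  | 0 => (0, 0)
  | i + 1 =>
    let p := staircase e i
    if p.2 < e (p.1 + 1) then (p.1, p.2 + 1) else (p.1 + 1, p.2)

section Staircase

variable {e : ℕ → ℕ}

theorem staircase_monoPath (e : ℕ → ℕ) (k : ℕ) : MonoPath (staircase e) k := by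
  refine ⟨rfl, fun i _ => ?_⟩
  simp only [staircase]
  split_ifs <;> simp

theorem onStaircase_staircase (he : Monotone e) (he0 : e 0 = 0) (i : ℕ) :
    OnStaircase e (staircase e i) := by
  induction i with
  | zero => simp [OnStaircase, staircase, he0]
  | succ i ih =>
    obtain ⟨h₁, h₂⟩ := ih
    simp only [staircase]
    split_ifs with h
    · exact ⟨by simp only; omega, h⟩
    · exact ⟨not_lt.1 h, h₂.trans (he (Nat.le_succ _))⟩

theorem OnStaircase.eq_of_fst_add_snd_eq (he : Monotone e) {p q : ℕ × ℕ}
    (hp : OnStaircase e p) (hq : OnStaircase e q) (h : p.1 + p.2 = q.1 + q.2) : p = q := by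
  rcases lt_trichotomy p.1 q.1 with hpq | hpq | hpq
  · linarith [he (show p.1 + 1 ≤ q.1 by omega), hp.2, hq.1]
  · exact Prod.ext hpq (by omega)
  · linarith [he (show q.1 + 1 ≤ p.1 by omega), hq.2, hp.1]

theorem staircase_eq (he : Monotone e) (he0 : e 0 = 0) {x y : ℕ} (hxy : OnStaircase e (x, y)) :
    staircase e (x + y) = (x, y) :=
  (onStaircase_staircase he he0 _).eq_of_fst_add_snd_eq he hxy
    ((staircase_monoPath e _).fst_add_snd le_rfl)

theorem staircase_mem {S : Set (ℕ × ℕ)} (he : Monotone e) (he0 : e 0 = 0) {X Y : ℕ}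
    (hXY : e (X + 1) = Y) (hS : ∀ x ≤ X, ∀ y ≤ Y, OnStaircase e (x, y) → (x, y) ∈ S)
    {i : ℕ} (hi : i ≤ X + Y) : staircase e i ∈ S := by
  have hend : staircase e (X + Y) = (X, Y) :=
    staircase_eq he he0 ⟨hXY ▸ he (Nat.le_succ X), hXY.ge⟩
  obtain ⟨hx, hy⟩ := hend ▸ (staircase_monoPath e (X + Y)).monotone hi le_rfl
  exact hS _ hx _ hy (onStaircase_staircase he he0 i)

end Staircase

theorem boundedByTwoMonotonePaths_of_staircases {S : Set (ℕ × ℕ)} {lo hi : ℕ → ℕ} {X Y : ℕ}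
    (hlo : Monotone lo) (hlo0 : lo 0 = 0) (hloY : lo (X + 1) = Y)
    (hhi : Monotone hi) (hhi0 : hi 0 = 0) (hhiY : hi (X + 1) = Y)
    (hloS : ∀ x ≤ X, ∀ y ≤ Y, OnStaircase lo (x, y) → (x, y) ∈ S)
    (hhiS : ∀ x ≤ X, ∀ y ≤ Y, OnStaircase hi (x, y) → (x, y) ∈ S)
    (hbox : ∀ p ∈ S, p.1 ≤ X ∧ p.2 ≤ Y)
    (hlo_le : ∀ p ∈ S, lo p.1 ≤ p.2) (hle_hi : ∀ p ∈ S, p.2 ≤ hi (p.1 + 1)) :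
    BoundedByTwoMonotonePaths S := by
  refine ⟨X, Y, X + Y, X + Y, staircase lo, staircase hi, staircase_monoPath lo _,
    staircase_monoPath hi _, staircase_eq hlo hlo0 ⟨hloY ▸ hlo (Nat.le_succ X), hloY.ge⟩,
    staircase_eq hhi hhi0 ⟨hhiY ▸ hhi (Nat.le_succ X), hhiY.ge⟩,
    fun _ => staircase_mem hlo hlo0 hloY hloS, fun _ => staircase_mem hhi hhi0 hhiY hhiS,
    hbox, fun p hp => ⟨⟨p.1 + lo p.1, ?_, ?_⟩, ⟨p.1 + hi (p.1 + 1), ?_, ?_⟩⟩⟩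
  · have := hlo_le p hp
    have := hbox p hp
    omega
  · rw [staircase_eq hlo hlo0 ⟨le_rfl, hlo (Nat.le_succ _)⟩]
    exact ⟨rfl, hlo_le p hp⟩
  · have hx := (hbox p hp).1
    have : hi (p.1 + 1) ≤ hi (X + 1) := hhi (by omega)
    omega
  · rw [staircase_eq hhi hhi0 ⟨hhi (Nat.le_succ _), le_rfl⟩]
    exact ⟨rfl, hle_hi p hp⟩

section BoundingPaths

variable {S : Set (ℕ × ℕ)} {f : ℕ → ℕ × ℕ} {k : ℕ}

theorem exists_below_of_lowerPath (hf : MonoPath f k) (hfS : ∀ i ≤ k, f i ∈ S)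
    (hlow : ∀ p ∈ S, ∃ i ≤ k, (f i).1 = p.1 ∧ (f i).2 ≤ p.2) {p : ℕ × ℕ} (hp : p ∈ S)
    {x : ℕ} (hx : x ≤ p.1) : ∃ y ≤ p.2, (x, y) ∈ S := by
  obtain ⟨i, hik, hi₁, hi₂⟩ := hlow p hp
  obtain ⟨j, -, hji, hj⟩ :=
    (hf.of_le_s12 hik).exists_fst_eq_s12 (Nat.zero_le i) (by simp [hf.1]) (hi₁ ▸ hx)
  exact ⟨(f j).2, (hf.monotone hji hik).2.trans hi₂, hj ▸ hfS j (hji.trans hik)⟩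

theorem exists_above_of_upperPath (hf : MonoPath f k) (hfS : ∀ i ≤ k, f i ∈ S)
    (hup : ∀ p ∈ S, ∃ j ≤ k, (f j).1 = p.1 ∧ p.2 ≤ (f j).2) {p : ℕ × ℕ} (hp : p ∈ S)
    {x : ℕ} (hpx : p.1 ≤ x) (hxk : x ≤ (f k).1) : ∃ y, p.2 ≤ y ∧ (x, y) ∈ S := by
  obtain ⟨i, hik, hi₁, hi₂⟩ := hup p hp
  obtain ⟨j, hij, hjk, hj⟩ := hf.exists_fst_eq_s12 hik (hi₁ ▸ hpx) hxk
  exact ⟨(f j).2, hi₂.trans (hf.monotone hij hjk).2, hj ▸ hfS j hjk⟩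

theorem accessible_of_lowerPath (hS : OrthoConvex S) (hf : MonoPath f k)
    (hfS : ∀ i ≤ k, f i ∈ S) (hlow : ∀ p ∈ S, ∃ i ≤ k, (f i).1 = p.1 ∧ (f i).2 ≤ p.2)
    {x y : ℕ} (hxy : (x, y) ∈ S) (h0 : (x, y) ≠ (0, 0)) :
    (1 ≤ x ∧ (x - 1, y) ∈ S) ∨ (1 ≤ y ∧ (x, y - 1) ∈ S) := by
  obtain ⟨i, hik, hi₁, hi₂⟩ := hlow _ hxy
  dsimp only at hi₁ hi₂
  rcases hi₂.lt_or_eq with hlt | heq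
  · exact Or.inr ⟨by omega, hS.2 x (f i).2 y (y - 1) (hi₁ ▸ hfS i hik) hxy (by omega) (by omega)⟩
  have hfi : f i = (x, y) := Prod.ext hi₁ heq
  obtain ⟨j, rfl⟩ : ∃ j, i = j + 1 :=
    Nat.exists_eq_succ_of_ne_zero (by rintro rfl; exact h0 (hfi ▸ hf.1))
  have hstep := hf.step (show j < k by omega)
  have hj := hfS j (by omega)
  rw [hfi] at hstep
  generalize f j = q at hstep hj
  rcases hstep with h | h <;> obtain ⟨rfl, rfl⟩ := Prod.mk.inj h
  · exact Or.inl ⟨by omega, by simpa using hj⟩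
  · exact Or.inr ⟨by omega, by simpa using hj⟩

theorem exists_succ_mem_of_upperPath (hS : OrthoConvex S) (hf : MonoPath f k)
    (hfS : ∀ i ≤ k, f i ∈ S) (hup : ∀ p ∈ S, ∃ j ≤ k, (f j).1 = p.1 ∧ p.2 ≤ (f j).2)
    {x y : ℕ} (hxy : (x, y) ∈ S) (hk : (x, y) ≠ f k) : (x + 1, y) ∈ S ∨ (x, y + 1) ∈ S := by
  obtain ⟨j, hjk, hj₁, hj₂⟩ := hup _ hxy
  dsimp only at hj₁ hj₂
  rcases hj₂.lt_or_eq with hlt | heq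
  · exact Or.inr (hS.2 x y _ (y + 1) hxy (hj₁ ▸ hfS j hjk) (by omega) hlt)
  have hfj : f j = (x, y) := Prod.ext hj₁ heq.symm
  have hjk' : j < k := lt_of_le_of_ne hjk (by rintro rfl; exact hk hfj.symm)
  have hnext := hfS (j + 1) hjk'
  rcases hf.step hjk' with h | h <;> rw [h, hfj] at hnext
  exacts [Or.inl hnext, Or.inr hnext]

theorem IsAntimatroidal.of_boundedByTwoMonotonePaths (hfin : S.Finite) (hS : OrthoConvex S)
    (hb : BoundedByTwoMonotonePaths S) : IsAntimatroidal S := by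
  obtain ⟨X, Y, kl, ku, fl, fu, hfl, hfu, -, hfuk, hflS, hfuS, hbox, hcols⟩ := hb
  have hlow := fun p hp => (hcols p hp).1
  have hup := fun p hp => (hcols p hp).2
  refine ⟨hfin, ⟨_, hflS 0 (Nat.zero_le _)⟩, fun _ _ => accessible_of_lowerPath hS hfl hflS hlow,
    fun a₁ a₂ b₁ b₂ ha hb hab => ?_⟩
  have haX := hbox _ ha
  have hbX := hbox _ hb
  refine ⟨fun _ => exists_succ_mem_of_upperPath hS hfu hfuS hup hb ?_, fun ⟨h₁, _⟩ => ?_,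
    fun ⟨h₁, h₂⟩ => ?_⟩
  · rw [hfuk]
    rintro ⟨⟩
    exact hab haX
  · obtain ⟨y, hy, hyS⟩ :=
      exists_above_of_upperPath hfu hfuS hup ha (x := b₁) h₁ (by rw [hfuk]; exact hbX.1)
    exact hS.2 b₁ b₂ y (b₂ + 1) hb hyS (by omega) (by simp at hy; omega)
  · obtain ⟨y, hy, hyS⟩ := exists_below_of_lowerPath hfl hflS hlow ha (x := b₁ + 1) (by simp; omega)
    obtain ⟨y', hy', hy'S⟩ :=
      exists_above_of_upperPath hfu hfuS hup hb (x := b₁ + 1) (by simp) (by rw [hfuk]; simp; omega)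
    exact hS.2 _ y y' b₂ hyS hy'S (by simp at hy; omega) hy'

end BoundingPaths

noncomputable def colMin (S : Set (ℕ × ℕ)) (x : ℕ) : ℕ :=
  sInf {y | (x, y) ∈ S}

/-- The height of `S` strictly left of column `x`; `0` when there is nothing there. -/
noncomputable def heightLeftOf (S : Set (ℕ × ℕ)) (x : ℕ) : ℕ :=
  sSup {y | ∃ x' < x, (x', y) ∈ S}

/-- Past column `X` the value `Y` makes the staircase climb the last column up to `(X, Y)`. -/
noncomputable def lowerProfile (S : Set (ℕ × ℕ)) (X Y x : ℕ) : ℕ :=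
  if x ≤ X then colMin S x else Y

section Profiles

variable {S : Set (ℕ × ℕ)} {x y : ℕ}

theorem colMin_le (hxy : (x, y) ∈ S) : colMin S x ≤ y :=
  Nat.sInf_le hxy

theorem colMin_mem (hxy : (x, y) ∈ S) : (x, colMin S x) ∈ S :=
  Nat.sInf_mem (s := {y | (x, y) ∈ S}) ⟨y, hxy⟩

theorem bddAbove_heightLeftOf (hfin : S.Finite) (x : ℕ) : BddAbove {y | ∃ x' < x, (x', y) ∈ S} :=
  (hfin.image Prod.snd).bddAbove.mono <| by
    rintro _ ⟨_, _, hy⟩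
    exact ⟨_, hy, rfl⟩

theorem heightLeftOf_zero : heightLeftOf S 0 = 0 := by
  simp [heightLeftOf]

theorem monotone_heightLeftOf (hfin : S.Finite) : Monotone (heightLeftOf S) :=
  fun _ x' hx => csSup_le_csSup' (bddAbove_heightLeftOf hfin x')
    fun _ ⟨z, hz, hzy⟩ => ⟨z, hz.trans_le hx, hzy⟩

theorem le_heightLeftOf (hfin : S.Finite) (hxy : (x, y) ∈ S) : y ≤ heightLeftOf S (x + 1) :=
  le_csSup (bddAbove_heightLeftOf hfin _) ⟨x, x.lt_succ_self, hxy⟩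

end Profiles

namespace IsAntimatroidal

variable {S : Set (ℕ × ℕ)}

theorem exists_monoStep_mem (h : IsAntimatroidal S) {p : ℕ × ℕ} (hp : p ∈ S)
    (h0 : p ≠ (0, 0)) : ∃ q ∈ S, MonoStep q p := by
  obtain ⟨x, y⟩ := p
  rcases h.2.2.1 x y hp h0 with ⟨hx, hq⟩ | ⟨hy, hq⟩
  · exact ⟨_, hq, Or.inl (by simp; omega)⟩
  · exact ⟨_, hq, Or.inr (by simp; omega)⟩

theorem exists_monoPath (h : IsAntimatroidal S) {p : ℕ × ℕ} (hp : p ∈ S) :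
    ∃ f k, MonoPath f k ∧ f k = p ∧ ∀ i ≤ k, f i ∈ S := by
  induction hn : p.1 + p.2 generalizing p with
  | zero =>
    obtain rfl : p = (0, 0) := Prod.ext (by simp; omega) (by simp; omega)
    exact ⟨fun _ => (0, 0), 0, ⟨rfl, by simp⟩, rfl, fun _ _ => hp⟩
  | succ n ih =>
    obtain ⟨q, hq, hqp⟩ := h.exists_monoStep_mem hp (by rintro rfl; simp at hn)
    obtain ⟨f, k, hf, rfl, hfS⟩ := ih hq (by have := hqp.fst_add_snd; omega)
    refine ⟨Function.update f (k + 1) p, k + 1, hf.snoc hqp, by simp, fun i hi => ?_⟩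
    rcases eq_or_ne i (k + 1) with rfl | hik
    · simpa
    · rw [Function.update_of_ne hik]
      exact hfS i (by omega)

theorem zero_mem (h : IsAntimatroidal S) : ((0, 0) : ℕ × ℕ) ∈ S := by
  obtain ⟨p, hp⟩ := h.2.1
  obtain ⟨f, k, hf, -, hfS⟩ := h.exists_monoPath hp
  exact hf.1 ▸ hfS 0 (Nat.zero_le k)

theorem exists_mem_column (h : IsAntimatroidal S) {p : ℕ × ℕ} (hp : p ∈ S) {x : ℕ}
    (hx : x ≤ p.1) : ∃ y, (x, y) ∈ S := by
  obtain ⟨f, k, hf, rfl, hfS⟩ := h.exists_monoPath hp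
  obtain ⟨j, -, hjk, hj⟩ := hf.exists_fst_eq_s12 (Nat.zero_le k) (by simp [hf.1]) hx
  exact ⟨(f j).2, hj ▸ hfS j hjk⟩

theorem mem_of_exchange_up (h : IsAntimatroidal S) {a₁ a₂ b₁ b₂ y : ℕ} (ha : (a₁, a₂) ∈ S)
    (hb : (b₁, b₂) ∈ S) (hab : a₁ ≤ b₁) (hby : b₂ ≤ y) (hya : y ≤ a₂) : (b₁, y) ∈ S := by
  induction y, hby using Nat.le_induction with
  | base => exact hb
  | succ y _ ih => exact (h.2.2.2 a₁ a₂ b₁ y ha (ih (by omega)) (by omega)).2.1 ⟨hab, by omega⟩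

theorem mem_of_exchange_right (h : IsAntimatroidal S) {a₁ a₂ b₁ b₂ x : ℕ} (ha : (a₁, a₂) ∈ S)
    (hb : (b₁, b₂) ∈ S) (hab : a₂ ≤ b₂) (hbx : b₁ ≤ x) (hxa : x ≤ a₁) : (x, b₂) ∈ S := by
  induction x, hbx using Nat.le_induction with
  | base => exact hb
  | succ x _ ih => exact (h.2.2.2 a₁ a₂ x b₂ ha (ih (by omega)) (by omega)).2.2 ⟨by omega, hab⟩

theorem orthoConvex (h : IsAntimatroidal S) : OrthoConvex S :=
  ⟨fun _ _ _ _ h₁ h₂ hx₁ hx₂ => h.mem_of_exchange_right h₂ h₁ le_rfl hx₁ hx₂,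
    fun _ _ _ _ h₁ h₂ hy₁ hy₂ => h.mem_of_exchange_up h₂ h₁ le_rfl hy₁ hy₂⟩

theorem n4Connected (h : IsAntimatroidal S) : N4Connected S := by
  intro A hA B hB
  obtain ⟨f, k, hf, rfl, hfS⟩ := h.exists_monoPath hA
  obtain ⟨g, l, hg, rfl, hgS⟩ := h.exists_monoPath hB
  exact (hf.n4Joined hfS).symm.trans (hg.n4Joined hgS)

/-- Accessibility at the lowest point of column `x + 1`, whose lower neighbour is missing. -/
theorem mem_colMin_succ (h : IsAntimatroidal S) {x y : ℕ} (hxy : (x + 1, y) ∈ S) :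
    (x, colMin S (x + 1)) ∈ S := by
  rcases h.2.2.1 _ _ (colMin_mem hxy) (by simp) with ⟨-, hq⟩ | ⟨hm, hq⟩
  · simpa using hq
  · exact absurd (colMin_le hq) (by omega)

theorem colMin_le_heightLeftOf (h : IsAntimatroidal S) {x y : ℕ} (hxy : (x, y) ∈ S) :
    colMin S x ≤ heightLeftOf S x := by
  cases x with
  | zero => exact (colMin_le h.zero_mem).trans (Nat.zero_le _)
  | succ x =>
    exact le_csSup (bddAbove_heightLeftOf h.1 _) ⟨x, x.lt_succ_self, h.mem_colMin_succ hxy⟩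

theorem mem_of_onStaircase_heightLeftOf (h : IsAntimatroidal S) {x y₀ y : ℕ} (hx : (x, y₀) ∈ S)
    (hy : OnStaircase (heightLeftOf S) (x, y)) : (x, y) ∈ S := by
  obtain ⟨x', hx', htop⟩ : heightLeftOf S (x + 1) ∈ {y | ∃ x' < x + 1, (x', y) ∈ S} :=
    Nat.sSup_mem ⟨0, 0, x.succ_pos, h.zero_mem⟩ (bddAbove_heightLeftOf h.1 _)
  exact h.mem_of_exchange_up htop (colMin_mem hx) (by omega)
    ((h.colMin_le_heightLeftOf hx).trans hy.1) hy.2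

section LowerProfile

variable {X Y : ℕ}

theorem mem_lowerProfile_succ (h : IsAntimatroidal S) (hXY : (X, Y) ∈ S) {x : ℕ} (hx : x ≤ X) :
    (x, lowerProfile S X Y (x + 1)) ∈ S := by
  rcases hx.lt_or_eq with hx | rfl
  · obtain ⟨y, hy⟩ := h.exists_mem_column hXY hx
    rw [lowerProfile, if_pos (show x + 1 ≤ X from hx)]
    exact h.mem_colMin_succ hy
  · rwa [lowerProfile, if_neg (by omega)]

theorem monotone_lowerProfile (h : IsAntimatroidal S) (hXY : (X, Y) ∈ S) :
    Monotone (lowerProfile S X Y) := by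
  refine monotone_nat_of_le_succ fun x => ?_
  by_cases hx : x ≤ X
  · rw [lowerProfile, if_pos hx]
    exact colMin_le (h.mem_lowerProfile_succ hXY hx)
  · simp only [lowerProfile, if_neg hx, if_neg (show ¬ x + 1 ≤ X by omega), le_rfl]

theorem mem_of_onStaircase_lowerProfile (h : IsAntimatroidal S) (hXY : (X, Y) ∈ S) {x y : ℕ}
    (hx : x ≤ X) (hy : OnStaircase (lowerProfile S X Y) (x, y)) : (x, y) ∈ S := by
  have hlo := hy.1
  simp only [lowerProfile, if_pos hx] at hlo
  obtain ⟨y', hy'⟩ := h.exists_mem_column hXY hx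
  exact h.orthoConvex.2 x _ _ y (colMin_mem hy') (h.mem_lowerProfile_succ hXY hx) hlo hy.2

end LowerProfile

theorem boundedByTwoMonotonePaths (h : IsAntimatroidal S) : BoundedByTwoMonotonePaths S := by
  obtain ⟨pX, hpX, hX⟩ := Set.exists_max_image S Prod.fst h.1 h.2.1
  obtain ⟨pY, hpY, hY⟩ := Set.exists_max_image S Prod.snd h.1 h.2.1
  have hXY : (pX.1, pY.2) ∈ S := h.mem_of_exchange_right hpX hpY (hY pX hpX) (hX pY hpY) le_rfl
  refine boundedByTwoMonotonePaths_of_staircases (h.monotone_lowerProfile hXY) ?_ ?_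
    (monotone_heightLeftOf h.1) heightLeftOf_zero ?_
    (fun _ hx _ _ => h.mem_of_onStaircase_lowerProfile hXY hx)
    (fun _ hx _ _ => (h.exists_mem_column hXY hx).elim fun _ => h.mem_of_onStaircase_heightLeftOf)
    (fun p hp => ⟨hX p hp, hY p hp⟩) (fun p hp => ?_) (fun _ => le_heightLeftOf h.1)
  · simpa [lowerProfile] using colMin_le h.zero_mem
  · simp [lowerProfile]
  · exact le_antisymm (csSup_le' fun _ ⟨_, _, hy⟩ => hY _ hy) (le_heightLeftOf h.1 hXY)
  · rw [lowerProfile, if_pos (hX p hp)]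
    exact colMin_le hp

end IsAntimatroidal

theorem antimatroidal_iff_geometric (S : Set (ℕ × ℕ)) :
    IsAntimatroidal S ↔
      (S.Finite ∧ OrthoConvex S ∧ N4Connected S ∧ BoundedByTwoMonotonePaths S) :=
  ⟨fun h => ⟨h.1, h.orthoConvex, h.n4Connected, h.boundedByTwoMonotonePaths⟩,
    fun ⟨hfin, hS, _, hb⟩ => .of_boundedByTwoMonotonePaths hfin hS hb⟩
end

section
/- Every antimatroidal point set S satisfies S = B_lower ∨ B_upper := { (max(x₁,x₂), max(y₁,y₂)) : (x₁,y₁) ∈ B_lower, (x₂,y₂) ∈ B_upper }. Consequently, S is the union of two maximal chains, so the convex dimension of a two-dimensional poly-antimatroid is at most 2. -/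
/-- `p` belongs to the upper boundary of `S` (points with a negative
coordinate, i.e. when `x = 0`, count as missing). -/
def InUpperBoundary (S : Set (ℕ × ℕ)) (p : ℕ × ℕ) : Prop :=
  p ∈ S ∧ ((p.1 = 0 ∨ (p.1 - 1, p.2) ∉ S) ∨ (p.1, p.2 + 1) ∉ S ∨
    (p.1 = 0 ∨ (p.1 - 1, p.2 + 1) ∉ S))

/-!
By the exchange property, `S` is closed under componentwise maxima (walk from one point towards
the other one unit step at a time), so the join lies in `S`. Conversely, for `(x, y) ∈ S` the
lowest point of `S` in column `x` is on the lower boundary, the leftmost point of `S` in row `y`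
is on the upper boundary, and their join is `(x, y)`.
-/

namespace IsAntimatroidal

variable {S : Set (ℕ × ℕ)}

theorem mk_mem_of_upper_left (h : IsAntimatroidal S) {a₁ a₂ b₁ b₂ : ℕ} (ha : (a₁, a₂) ∈ S)
    (hb : (b₁, b₂) ∈ S) (h₁ : b₁ ≤ a₁) (h₂ : a₂ ≤ b₂) : (a₁, b₂) ∈ S := by
  suffices ∀ c, b₁ ≤ c → c ≤ a₁ → (c, b₂) ∈ S from this a₁ h₁ le_rfl
  intro c hc
  induction c, hc using Nat.le_induction with
  | base => exact fun _ => hb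
  | succ c _ ih =>
    intro hca
    have hc : c ≤ a₁ := Nat.le_of_succ_le hca
    exact (h.2.2.2 a₁ a₂ c b₂ ha (ih hc) (by omega)).2.2 ⟨hc, h₂⟩

theorem mk_mem_of_lower_right (h : IsAntimatroidal S) {a₁ a₂ b₁ b₂ : ℕ} (ha : (a₁, a₂) ∈ S)
    (hb : (b₁, b₂) ∈ S) (h₁ : a₁ ≤ b₁) (h₂ : b₂ ≤ a₂) : (b₁, a₂) ∈ S := by
  suffices ∀ c, b₂ ≤ c → c ≤ a₂ → (b₁, c) ∈ S from this a₂ h₂ le_rfl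
  intro c hc
  induction c, hc using Nat.le_induction with
  | base => exact fun _ => hb
  | succ c _ ih =>
    intro hca
    have hc : c ≤ a₂ := Nat.le_of_succ_le hca
    exact (h.2.2.2 a₁ a₂ b₁ c ha (ih hc) (by omega)).2.1 ⟨h₁, hc⟩

theorem max_mem (h : IsAntimatroidal S) {a b : ℕ × ℕ} (ha : a ∈ S) (hb : b ∈ S) :
    (max a.1 b.1, max a.2 b.2) ∈ S := by
  obtain ⟨a₁, a₂⟩ := a
  obtain ⟨b₁, b₂⟩ := b
  rcases le_total a₁ b₁ with h₁ | h₁ <;> rcases le_total a₂ b₂ with h₂ | h₂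
  · simpa [h₁, h₂] using hb
  · simpa [h₁, h₂] using h.mk_mem_of_lower_right ha hb h₁ h₂
  · simpa [h₁, h₂] using h.mk_mem_of_upper_left ha hb h₁ h₂
  · simpa [h₁, h₂] using ha

end IsAntimatroidal

theorem inLowerBoundary_of_forall_lt {S : Set (ℕ × ℕ)} {x y : ℕ} (hS : (x, y) ∈ S)
    (hmin : ∀ y' < y, (x, y') ∉ S) : InLowerBoundary S (x, y) := by
  refine ⟨hS, Or.inr (Or.inl ?_)⟩
  rcases Nat.eq_zero_or_pos y with hy | hy
  · exact Or.inl hy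
  · exact Or.inr (hmin (y - 1) (by omega))

theorem inUpperBoundary_of_forall_lt {S : Set (ℕ × ℕ)} {x y : ℕ} (hS : (x, y) ∈ S)
    (hmin : ∀ x' < x, (x', y) ∉ S) : InUpperBoundary S (x, y) := by
  refine ⟨hS, Or.inl ?_⟩
  rcases Nat.eq_zero_or_pos x with hx | hx
  · exact Or.inl hx
  · exact Or.inr (hmin (x - 1) (by omega))

theorem eq_join_of_boundaries (S : Set (ℕ × ℕ)) (h : IsAntimatroidal S) :
    S = {p : ℕ × ℕ | ∃ a b, InLowerBoundary S a ∧ InUpperBoundary S b ∧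
          p = (max a.1 b.1, max a.2 b.2)} := by
  classical
  ext p
  constructor
  · obtain ⟨x, y⟩ := p
    intro hp
    have hcol : ∃ y', (x, y') ∈ S := ⟨y, hp⟩
    have hrow : ∃ x', (x', y) ∈ S := ⟨x, hp⟩
    refine ⟨(x, Nat.find hcol), (Nat.find hrow, y),
      inLowerBoundary_of_forall_lt (Nat.find_spec hcol) fun _ => Nat.find_min hcol,
      inUpperBoundary_of_forall_lt (Nat.find_spec hrow) fun _ => Nat.find_min hrow, ?_⟩
    simp [Nat.find_min' hcol hp, Nat.find_min' hrow hp]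
  · rintro ⟨a, b, ha, hb, rfl⟩
    exact h.max_mem ha.1 hb.1
end

section
/- The union C = C₁ ∪ ... ∪ C_n of a regular sequence of digital cuboids (an n-step staircase) is a poly-antimatroid: it is accessible and closed under componentwise maximum. -/
/-- Accessibility (A1) for a set of points in `ℕ³`: every nonzero point of `C`
has a point of `C` obtained by decrementing one coordinate. -/
def Accessible3 (C : Set (ℕ × ℕ × ℕ)) : Prop :=
  ∀ p ∈ C, p ≠ (0, 0, 0) →
    (1 ≤ p.1 ∧ (p.1 - 1, p.2.1, p.2.2) ∈ C) ∨
    (1 ≤ p.2.1 ∧ (p.1, p.2.1 - 1, p.2.2) ∈ C) ∨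
    (1 ≤ p.2.2 ∧ (p.1, p.2.1, p.2.2 - 1) ∈ C)

/-- Componentwise maximum (multiset union) of two points of `ℕ³`. -/
def sup3 (a b : ℕ × ℕ × ℕ) : ℕ × ℕ × ℕ :=
  (max a.1 b.1, max a.2.1 b.2.1, max a.2.2 b.2.2)

/-- Componentwise minimum (multiset intersection) of two points of `ℕ³`. -/
def inf3 (a b : ℕ × ℕ × ℕ) : ℕ × ℕ × ℕ :=
  (min a.1 b.1, min a.2.1 b.2.1, min a.2.2 b.2.2)

/-- Componentwise order on points of `ℕ³`. -/
def le3 (a b : ℕ × ℕ × ℕ) : Prop :=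
  a.1 ≤ b.1 ∧ a.2.1 ≤ b.2.1 ∧ a.2.2 ≤ b.2.2

/-- The digital cuboid with minimum corner `a` and maximum corner `b`. -/
def Cuboid (a b : ℕ × ℕ × ℕ) : Set (ℕ × ℕ × ℕ) :=
  {p | a.1 ≤ p.1 ∧ p.1 ≤ b.1 ∧ a.2.1 ≤ p.2.1 ∧ p.2.1 ≤ b.2.1 ∧
       a.2.2 ≤ p.2.2 ∧ p.2.2 ≤ b.2.2}

/-- `lo 0, hi 0`, ..., `lo (n-1), hi (n-1)` are the corners of a regular
sequence of `n` digital cuboids. -/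
def RegularSeq (n : ℕ) (lo hi : ℕ → ℕ × ℕ × ℕ) : Prop :=
  1 ≤ n ∧ lo 0 = (0, 0, 0) ∧
  (∀ i < n, le3 (lo i) (hi i) ∧ lo i ≠ hi i) ∧
  (∀ i, i + 1 < n →
    (le3 (lo i) (lo (i + 1)) ∧ lo i ≠ lo (i + 1)) ∧
    le3 (lo (i + 1)) (hi i) ∧
    (le3 (hi i) (hi (i + 1)) ∧ hi i ≠ hi (i + 1)))

/-- The `n`-step staircase determined by a (regular) sequence of cuboids. -/
def Staircase (n : ℕ) (lo hi : ℕ → ℕ × ℕ × ℕ) : Set (ℕ × ℕ × ℕ) :=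
  {p | ∃ i < n, p ∈ Cuboid (lo i) (hi i)}

/-!
Read `le3`, `sup3` and `Cuboid` as the product order, `⊔` and `Set.Icc` on `ℕ³`. Since the upper
corners increase, a join of points of cuboids `i ≤ j` stays in cuboid `j`. A point of cuboid `i`
strictly above its lower corner can be lowered inside the cuboid; the lower corner `lo (i + 1)` is
strictly above `lo i` and below `hi i`, so it can be lowered into cuboid `i`; and `lo 0` is the
origin.
-/

open Set

lemma sup3_eq_sup (a b : ℕ × ℕ × ℕ) : sup3 a b = a ⊔ b := rfl

lemma cuboid_eq_Icc (a b : ℕ × ℕ × ℕ) : Cuboid a b = Icc a b := by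
  ext p
  simp only [Cuboid, mem_ofPred_eq, mem_Icc, Prod.le_def]
  tauto

lemma mem_staircase {n : ℕ} {lo hi : ℕ → ℕ × ℕ × ℕ} {p : ℕ × ℕ × ℕ} :
    p ∈ Staircase n lo hi ↔ ∃ i < n, p ∈ Icc (lo i) (hi i) := by
  simp only [Staircase, cuboid_eq_Icc]
  rfl

lemma sup_mem_Icc_of_le {α : Type*} [SemilatticeSup α] {a b a' b' x y : α}
    (hx : x ∈ Icc a b) (hy : y ∈ Icc a' b') (hb : b ≤ b') : x ⊔ y ∈ Icc a' b' :=
  ⟨hy.1.trans le_sup_right, sup_le (hx.2.trans hb) hy.2⟩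

def HasLowerNeighbor (C : Set (ℕ × ℕ × ℕ)) (p : ℕ × ℕ × ℕ) : Prop :=
  (1 ≤ p.1 ∧ (p.1 - 1, p.2.1, p.2.2) ∈ C) ∨
  (1 ≤ p.2.1 ∧ (p.1, p.2.1 - 1, p.2.2) ∈ C) ∨
  (1 ≤ p.2.2 ∧ (p.1, p.2.1, p.2.2 - 1) ∈ C)

lemma HasLowerNeighbor.mono {C D : Set (ℕ × ℕ × ℕ)} {p : ℕ × ℕ × ℕ}
    (h : HasLowerNeighbor C p) (hCD : C ⊆ D) : HasLowerNeighbor D p :=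
  h.imp (.imp_right (hCD ·)) (.imp (.imp_right (hCD ·)) (.imp_right (hCD ·)))

lemma hasLowerNeighbor_Icc {a b p : ℕ × ℕ × ℕ} (hap : a < p) (hpb : p ≤ b) :
    HasLowerNeighbor (Icc a b) p := by
  simp only [HasLowerNeighbor, mem_Icc, Prod.le_def, Prod.lt_iff] at *
  omega

namespace RegularSeq

variable {n : ℕ} {lo hi : ℕ → ℕ × ℕ × ℕ}

lemma lo_lt_lo_succ (h : RegularSeq n lo hi) {i : ℕ} (hin : i + 1 < n) : lo i < lo (i + 1) :=
  lt_of_le_of_ne (h.2.2.2 i hin).1.1 (h.2.2.2 i hin).1.2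

lemma lo_succ_le_hi (h : RegularSeq n lo hi) {i : ℕ} (hin : i + 1 < n) : lo (i + 1) ≤ hi i :=
  (h.2.2.2 i hin).2.1

lemma monotoneOn_hi (h : RegularSeq n lo hi) : MonotoneOn hi (Iio n) :=
  monotoneOn_of_le_succ ordConnected_Iio fun i _ _ hin ↦ (h.2.2.2 i hin).2.2.1

lemma accessible3 (h : RegularSeq n lo hi) : Accessible3 (Staircase n lo hi) := by
  have hsub : ∀ j < n, Icc (lo j) (hi j) ⊆ Staircase n lo hi :=
    fun j hjn _ hq ↦ mem_staircase.2 ⟨j, hjn, hq⟩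
  intro p hp hp0
  obtain ⟨i, hin, hp⟩ := mem_staircase.1 hp
  rcases hp.1.lt_or_eq with hlt | rfl
  · exact (hasLowerNeighbor_Icc hlt hp.2).mono (hsub i hin)
  · obtain _ | k := i
    · exact absurd h.2.1 hp0
    · exact (hasLowerNeighbor_Icc (h.lo_lt_lo_succ hin) (h.lo_succ_le_hi hin)).mono
        (hsub k (by omega))

lemma sup3_mem (h : RegularSeq n lo hi) {a b : ℕ × ℕ × ℕ} (ha : a ∈ Staircase n lo hi)
    (hb : b ∈ Staircase n lo hi) : sup3 a b ∈ Staircase n lo hi := by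
  obtain ⟨i, hin, ha⟩ := mem_staircase.1 ha
  obtain ⟨j, hjn, hb⟩ := mem_staircase.1 hb
  rw [sup3_eq_sup, mem_staircase]
  rcases le_total i j with hij | hji
  · exact ⟨j, hjn, sup_mem_Icc_of_le ha hb (h.monotoneOn_hi hin hjn hij)⟩
  · exact ⟨i, hin, sup_comm b a ▸ sup_mem_Icc_of_le hb ha (h.monotoneOn_hi hjn hin hji)⟩

end RegularSeq

theorem staircase_is_poly_antimatroid (n : ℕ) (lo hi : ℕ → ℕ × ℕ × ℕ)
    (hreg : RegularSeq n lo hi) :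
    Accessible3 (Staircase n lo hi) ∧
    (∀ a ∈ Staircase n lo hi, ∀ b ∈ Staircase n lo hi,
      sup3 a b ∈ Staircase n lo hi) :=
  ⟨hreg.accessible3, fun _ ha _ hb ↦ hreg.sup3_mem ha hb⟩
end
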